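/- Let c : ℝ³ → ℂ be smooth with all derivatives bounded, symmetric in its first and third arguments (c(ξ₁,ξ₂,ξ₃) = c(ξ₃,ξ₂,ξ₁)), and conservative (Im c(ξ,ξ,η) = 0 for all ξ,η ∈ ℝ). Define the symmetrized quartic mass symbol c⁴_m(ξ₁,ξ₂,ξ₃,ξ₄) = (i/2)(−c(ξ₁,ξ₂,ξ₃) − c(ξ₁,ξ₄,ξ₃) + conj(c(ξ₂,ξ₃,ξ₄)) + conj(c(ξ₂,ξ₁,ξ₄))) and the symmetrized quartic momentum symbol c⁴_p(ξ₁,ξ₂,ξ₃,ξ₄) = (i/2)((ξ₁−ξ₂+ξ₃+ξ₄)c(ξ₁,ξ₂,ξ₃) + (ξ₁−ξ₄+ξ₃+ξ₂)c(ξ₁,ξ₄,ξ₃) − (ξ₁+ξ₂−ξ₃+ξ₄)conj(c(ξ₂,ξ₃,ξ₄)) − (ξ₃+ξ₂−ξ₁+ξ₄)conj(c(ξ₂,ξ₁,ξ₄))). Then both c⁴_m and c⁴_p vanish identically on the resonant set R; equivalently, c⁴_m(ξ₁,ξ₁,ξ₃,ξ₃) = c⁴_m(ξ₁,ξ₃,ξ₃,ξ₁)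 = 0 and c⁴_p(ξ₁,ξ₁,ξ₃,ξ₃) = c⁴_p(ξ₁,ξ₃,ξ₃,ξ₁) = 0 for all ξ₁,ξ₃ ∈ ℝ. -/
import Mathlib


noncomputable section
open ComplexConjugate

/-- The symmetrized quartic mass symbol
`c⁴_m = (i/2)(−c(ξ₁,ξ₂,ξ₃) − c(ξ₁,ξ₄,ξ₃) + conj c(ξ₂,ξ₃,ξ₄) + conj c(ξ₂,ξ₁,ξ₄))`. -/
def c4m (c : ℝ → ℝ → ℝ → ℂ) (ξ1 ξ2 ξ3 ξ4 : ℝ) : ℂ :=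
  (Complex.I / 2) *
    (- c ξ1 ξ2 ξ3 - c ξ1 ξ4 ξ3 + conj (c ξ2 ξ3 ξ4) + conj (c ξ2 ξ1 ξ4))

/-- The symmetrized quartic momentum symbol `c⁴_p`. -/
def c4p (c : ℝ → ℝ → ℝ → ℂ) (ξ1 ξ2 ξ3 ξ4 : ℝ) : ℂ :=
  (Complex.I / 2) *
    (((ξ1 - ξ2 + ξ3 + ξ4 : ℝ) : ℂ) * c ξ1 ξ2 ξ3
      + ((ξ1 - ξ4 + ξ3 + ξ2 : ℝ) : ℂ) * c ξ1 ξ4 ξ3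
      - ((ξ1 + ξ2 - ξ3 + ξ4 : ℝ) : ℂ) * conj (c ξ2 ξ3 ξ4)
      - ((ξ3 + ξ2 - ξ1 + ξ4 : ℝ) : ℂ) * conj (c ξ2 ξ1 ξ4))

/-- if `c` is smooth with bounded derivatives, symmetric in its outer
arguments and conservative, then the symmetrized quartic mass and momentum symbols
`c⁴_m`, `c⁴_p` vanish identically on the resonant set `R`. -/
theorem quartic_symbols_vanish_on_resonance (c : ℝ → ℝ → ℝ → ℂ)
    (hc_smooth : ContDiff ℝ (⊤ : ℕ∞) fun p : ℝ × ℝ × ℝ => c p.1 p.2.1 p.2.2)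
    (hc_bdd : ∀ n : ℕ, ∃ C : ℝ, ∀ p : ℝ × ℝ × ℝ,
      ‖iteratedFDeriv ℝ n (fun q : ℝ × ℝ × ℝ => c q.1 q.2.1 q.2.2) p‖ ≤ C)
    (hc_sym : ∀ ξ1 ξ2 ξ3, c ξ1 ξ2 ξ3 = c ξ3 ξ2 ξ1)
    (hc_cons : ∀ ξ η : ℝ, (c ξ ξ η).im = 0) :
    ∀ ξ1 ξ2 ξ3 ξ4 : ℝ,
      ξ1 - ξ2 + ξ3 - ξ4 = 0 → ξ1 ^ 2 - ξ2 ^ 2 + ξ3 ^ 2 - ξ4 ^ 2 = 0 →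
      c4m c ξ1 ξ2 ξ3 ξ4 = 0 ∧ c4p c ξ1 ξ2 ξ3 ξ4 = 0 := by
  intro ξ1 ξ2 ξ3 ξ4 h1 h2
  have hcase : (ξ2 = ξ1 ∧ ξ4 = ξ3) ∨ (ξ4 = ξ1 ∧ ξ2 = ξ3) := by
    rcases eq_or_ne ξ1 ξ2 with h | h
    · left; constructor
      · exact h.symm
      · linarith
    · right
      have hd : ξ1 - ξ2 = ξ4 - ξ3 := by linarith
      have hz : (ξ1 - ξ2) * (ξ1 + ξ2 - ξ3 - ξ4) = 0 := by
        linear_combination h2 - (ξ3 + ξ4) * hd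
      have hne : ξ1 - ξ2 ≠ 0 := sub_ne_zero.mpr h
      have hsum := (mul_eq_zero.mp hz).resolve_left hne
      constructor <;> linarith
  have hreal1 : ∀ a b : ℝ, conj (c a a b) = c a a b := by
    intro a b; exact Complex.conj_eq_iff_im.mpr (hc_cons a b)
  have hreal2 : ∀ a b : ℝ, conj (c a b b) = c a b b := by
    intro a b; rw [hc_sym a b b]; exact Complex.conj_eq_iff_im.mpr (hc_cons b a)
  rcases hcase with ⟨h2', h4'⟩ | ⟨h4', h2'⟩
  · rw [h2', h4']
    constructor
    · simp only [c4m, hreal1, hreal2]; ring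
    · simp only [c4p, hreal1, hreal2]; push_cast; ring
  · rw [h2', h4']
    have e1 : conj (c ξ3 ξ3 ξ1) = c ξ1 ξ3 ξ3 := by
      rw [hc_sym ξ3 ξ3 ξ1]; exact hreal2 ξ1 ξ3
    have e2 : conj (c ξ3 ξ1 ξ1) = c ξ1 ξ1 ξ3 := by
      rw [hc_sym ξ3 ξ1 ξ1]; exact hreal1 ξ1 ξ3
    constructor
    · simp only [c4m, e1, e2]; ring
    · simp only [c4p, e1, e2]; push_cast; ring
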